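/- arXiv:2208.06014 — 4 statements merged into one kernel-verified Lean document; each statement's English description precedes it below -/
import Mathlib

section
/- Let n : ℕ and let E : V_n → V_n → Prop be the edge relation of a succinctly represented directed graph on vertex set V_n. Then there exists a function g : V_n → V_n satisfying (H1) for all a, b ∈ V_n, a ≠ b → g a ≠ g b, and (H2) for all a, b ∈ V_n with b = a + 1, E (g a) (g b), if and only if the directed graph (V_n, E) has a Hamiltonian cycle, i.e., there is a list ℓ of vertices that contains every element of V_n exactly once, such that E holds between every two consecutive entries of ℓ and also from the last entry of ℓ to its first entry. -/
/-!
Binary expansion `num` is a bijection `V_n ≃ Fin (2 ^ n)` under which `b = a + 1` becomes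
`finRotate`, the cyclic successor on `Fin (2 ^ n)`. An injective self-map of the finite set `V_n`
is a bijection, and a list visiting every vertex exactly once is `List.ofFn f` for a bijection
`f : Fin N → V_n`; so both sides say that the vertices can be enumerated cyclically along edges.
-/

/-- `num v` is the number encoded by the boolean vector `v`. -/
def num {n : ℕ} (v : Fin n → Bool) : ℕ :=
  ∑ i : Fin n, 2 ^ (i : ℕ) * (if v i then 1 else 0)

def numEquiv (n : ℕ) : (Fin n → Bool) ≃ Fin (2 ^ n) :=
  (Equiv.arrowCongr (Equiv.refl _) finTwoEquiv.symm).trans finFunctionFinEquiv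

lemma val_numEquiv {n : ℕ} (v : Fin n → Bool) : (numEquiv n v : ℕ) = num v := by
  simp only [numEquiv, Equiv.trans_apply, finFunctionFinEquiv_apply, num]
  refine Finset.sum_congr rfl fun i _ => ?_
  cases h : v i <;> simp [h, finTwoEquiv, mul_comm]

lemma val_finRotate {N : ℕ} (i : Fin N) : (finRotate N i : ℕ) = (i + 1) % N := by
  cases N with
  | zero => exact i.elim0
  | succ m =>
    rw [coe_finRotate]
    split_ifs with h
    · simp [h]
    · rw [Nat.mod_eq_of_lt (by simpa using Fin.val_lt_last h)]

lemma numEquiv_eq_finRotate_iff {n : ℕ} (a b : Fin n → Bool) :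
    numEquiv n b = finRotate _ (numEquiv n a) ↔ num b = (num a + 1) % 2 ^ n := by
  rw [Fin.ext_iff, val_finRotate, val_numEquiv, val_numEquiv]

lemma List.count_ofFn_eq_one_iff {α : Type*} [DecidableEq α] {N : ℕ} (f : Fin N → α) :
    (∀ a, (ofFn f).count a = 1) ↔ Function.Bijective f := by
  rw [Function.Bijective, ← nodup_ofFn, nodup_iff_count_eq_one]
  constructor
  · intro h
    exact ⟨fun a _ => h a, fun a => (mem_ofFn' f a).mp (count_pos_iff.mp (h a ▸ one_pos))⟩
  · rintro ⟨hnd, hsurj⟩ a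
    exact hnd a ((mem_ofFn' f a).mpr (hsurj a))

lemma List.isChain_ofFn_and_getLast_head_iff {α : Type*} {N : ℕ} (f : Fin N → α)
    (R : α → α → Prop) :
    ((ofFn f).IsChain R ∧ ∀ h : ofFn f ≠ [], R ((ofFn f).getLast h) ((ofFn f).head h)) ↔
      ∀ i, R (f i) (f (finRotate N i)) := by
  cases N with
  | zero => simp
  | succ m =>
    simp only [isChain_ofFn, getLast_ofFn_succ, head_ofFn, Fin.forall_fin_succ' (n := m),
      finRotate_apply, Fin.coeSucc_eq_succ, Fin.forall_iff]
    simp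

lemma exists_list_count_eq_one_cyclic_chain_iff {α : Type*} [DecidableEq α] (R : α → α → Prop) :
    (∃ ℓ : List α, (∀ v, ℓ.count v = 1) ∧ ℓ.IsChain R ∧
        ∀ h : ℓ ≠ [], R (ℓ.getLast h) (ℓ.head h)) ↔
      ∃ (N : ℕ) (f : Fin N → α), Function.Bijective f ∧ ∀ i, R (f i) (f (finRotate N i)) := by
  constructor
  · rintro ⟨ℓ, hcount, hcycle⟩
    obtain ⟨N, f, rfl⟩ : ∃ N, ∃ f : Fin N → α, ℓ = List.ofFn f := ⟨_, _, (List.ofFn_get ℓ).symm⟩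
    exact ⟨N, f, (List.count_ofFn_eq_one_iff f).mp hcount,
      (List.isChain_ofFn_and_getLast_head_iff f R).mp hcycle⟩
  · rintro ⟨N, f, hf, hR⟩
    exact ⟨List.ofFn f, (List.count_ofFn_eq_one_iff f).mpr hf,
      (List.isChain_ofFn_and_getLast_head_iff f R).mpr hR⟩

theorem stmt_0 (n : ℕ) (E : (Fin n → Bool) → (Fin n → Bool) → Prop) :
    (∃ g : (Fin n → Bool) → (Fin n → Bool),
        (∀ a b : Fin n → Bool, a ≠ b → g a ≠ g b) ∧
        (∀ a b : Fin n → Bool, num b = (num a + 1) % 2 ^ n → E (g a) (g b)))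
      ↔
    (∃ ℓ : List (Fin n → Bool),
        (∀ v : Fin n → Bool, ℓ.count v = 1) ∧
        ℓ.Chain' E ∧
        ∀ (h : ℓ ≠ []), E (ℓ.getLast h) (ℓ.head h)) := by
  -- `List.Chain'` is a deprecated synonym of `List.IsChain`, matched only up to unfolding.
  refine Iff.trans ?_ (exists_list_count_eq_one_cyclic_chain_iff E).symm
  constructor
  · rintro ⟨g, hinj, hE⟩
    have hg : Function.Bijective g :=
      Finite.injective_iff_bijective.mp fun a b => not_imp_not.mp (hinj a b)
    refine ⟨2 ^ n, g ∘ (numEquiv n).symm, hg.comp (numEquiv n).symm.bijective, fun i => ?_⟩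
    exact hE _ _ ((numEquiv_eq_finRotate_iff _ _).mp (by simp))
  · rintro ⟨N, f, hf, hE⟩
    obtain rfl : N = 2 ^ n := by simpa using Fintype.card_of_bijective hf
    refine ⟨f ∘ numEquiv n, fun a b hab h => hab ((hf.1.comp (numEquiv n).injective) h),
      fun a b hab => ?_⟩
    rw [← numEquiv_eq_finRotate_iff] at hab
    simpa [hab] using hE (numEquiv n a)
end

section
/- Let n, m : ℕ and let C₁ : V_n → V_m → Bool and C₂ : V_n → Bool be a succinct subset-sum instance, defining s(b) = ∑_{a ∈ V_n} 2^{num(a)} · bv(C₁ a b) for each b ∈ V_m and t = ∑_{a ∈ V_n} 2^{num(a)} · bv(C₂ a). Then there exists a function g : V_n → V_m → Bool⁵, writing g a b = (α a b, β a b, γ a b, δ a b, ε a b), satisfying for all a, a' ∈ V_n and b, b' ∈ V_m: (i) α a b = α a' b; (ii) if α a b = false then γ a b = false, δ a b = false, and β a b = ε a b; (iii) if α a b = true then bv(γ a b) + bv(C₁ a b) + bv(β a b) = 2·bv(δ a b) + bv(ε a b); (iv) if num(a) = 0 then γ a b = false; (v) if num(a) = 2^n − 1 then δ a b = false; (vi)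 if num(b) = 0 then β a b = false and γ a b = false; (vii) if num(b) = 2^m − 1 then ε a b = C₂ a; (viii) if num(a') = num(a) + 1 then δ a b = γ a' b; (ix) if num(b') = num(b) + 1 then ε a b = β a b'; if and only if there exists a finite set X ⊆ V_m such that ∑_{b ∈ X} s(b) = t. -/
/-- `bv x` is the numerical value of the bit `x`. -/
def bv (x : Bool) : ℕ := if x then 1 else 0

/-!
Read column `b` of `C₁` as the binary expansion of `s b`, bit `num a` in row `a`. A certificate
records the schoolbook addition of the selected columns, taken in the order of `num b`: in row `a`,
`β` and `ε` are the bits of the running total before and after column `b`, and `γ`, `δ` the carries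
into and out of that bit. Weighting the full-adder equations of a column by `2 ^ num a` and summing,
the carries telescope away, so each selected column adds `s b` to a running total that starts at `0`
and ends at `t`. Conversely, for any `X` with `∑ b ∈ X, s b = t` the bits and carries of the partial
sums form a certificate; the last carry vanishes since every partial sum is at most
`t < 2 ^ 2 ^ n`.
-/

open Finset

section Encoding

variable {n : ℕ}

lemma num_eq_ofBits (v : Fin n → Bool) : num v = Nat.ofBits v := by
  induction n with
  | zero => simp [num]
  | succ n ih =>
    rw [Nat.ofBits_succ, ← ih, num, num, Fin.sum_univ_succ, mul_sum]
    simp only [Fin.val_zero, Fin.val_succ, pow_succ, Function.comp_apply]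
    cases v 0 <;> simp [add_comm, mul_comm]

lemma num_lt_two_pow (v : Fin n → Bool) : num v < 2 ^ n :=
  num_eq_ofBits v ▸ Nat.ofBits_lt_two_pow v

def enc (n k : ℕ) : Fin n → Bool := fun i => k.testBit i

lemma enc_num (v : Fin n → Bool) : enc n (num v) = v := by
  funext i
  simp [enc, num_eq_ofBits]

lemma num_enc {k : ℕ} (hk : k < 2 ^ n) : num (enc n k) = k := by
  rw [num_eq_ofBits]
  exact (Nat.ofBits_testBit k n).trans (Nat.mod_eq_of_lt hk)

lemma sum_eq_sum_range_enc {M : Type*} [AddCommMonoid M]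
    (f : (Fin n → Bool) → M) : ∑ a, f a = ∑ k ∈ range (2 ^ n), f (enc n k) :=
  sum_nbij' num (enc n) (fun a _ => mem_range.2 (num_lt_two_pow a)) (fun _ _ => mem_univ _)
    (fun a _ => enc_num a) (fun _ hk => num_enc (mem_range.1 hk)) (fun a _ => by rw [enc_num])

def succinctNum (f : (Fin n → Bool) → Bool) : ℕ := ∑ a, 2 ^ num a * bv (f a)

lemma succinctNum_eq_sum_range (f : (Fin n → Bool) → Bool) :
    succinctNum f = ∑ k ∈ range (2 ^ n), 2 ^ k * bv (f (enc n k)) := by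
  rw [succinctNum, sum_eq_sum_range_enc]
  exact sum_congr rfl fun k hk => by rw [num_enc (mem_range.1 hk)]

lemma succinctNum_eq_ofBits (f : (Fin n → Bool) → Bool) :
    succinctNum f = Nat.ofBits (fun k : Fin (2 ^ n) => f (enc n k)) := by
  rw [← num_eq_ofBits, succinctNum_eq_sum_range, ← Fin.sum_univ_eq_sum_range]
  rfl

lemma succinctNum_lt (f : (Fin n → Bool) → Bool) : succinctNum f < 2 ^ 2 ^ n :=
  succinctNum_eq_ofBits f ▸ Nat.ofBits_lt_two_pow _

lemma testBit_succinctNum (f : (Fin n → Bool) → Bool) (a : Fin n → Bool) :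
    (succinctNum f).testBit (num a) = f a := by
  rw [succinctNum_eq_ofBits, Nat.testBit_ofBits_lt _ _ (num_lt_two_pow a), enc_num]

end Encoding

lemma bv_eq_toNat (x : Bool) : bv x = x.toNat := by cases x <;> rfl

def carry (j x y : ℕ) : Bool := decide (2 ^ j ≤ x % 2 ^ j + y % 2 ^ j)

lemma carry_zero (x y : ℕ) : carry 0 x y = false := by simp [carry, Nat.mod_one]

lemma carry_eq_false_of_add_lt {j x y : ℕ} (h : x + y < 2 ^ j) : carry j x y = false := by
  have := Nat.mod_le x (2 ^ j)
  have := Nat.mod_le y (2 ^ j)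
  simp only [carry, decide_eq_false_iff_not, not_le]
  omega

lemma carry_zero_left (j y : ℕ) : carry j 0 y = false := by
  simpa [carry] using Nat.mod_lt y (Nat.two_pow_pos j)

lemma mod_two_pow_add_mod_two_pow (j x y : ℕ) :
    x % 2 ^ j + y % 2 ^ j = (x + y) % 2 ^ j + 2 ^ j * bv (carry j x y) := by
  have hx := Nat.mod_lt x (Nat.two_pow_pos j)
  have hy := Nat.mod_lt y (Nat.two_pow_pos j)
  rw [Nat.add_mod, carry]
  by_cases h : 2 ^ j ≤ x % 2 ^ j + y % 2 ^ j
  · have hlt : x % 2 ^ j + y % 2 ^ j - 2 ^ j < 2 ^ j := by omega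
    rw [Nat.mod_eq_sub_mod h, Nat.mod_eq_of_lt hlt, decide_eq_true h, bv, if_pos rfl, mul_one]
    omega
  · rw [Nat.mod_eq_of_lt (not_le.1 h), decide_eq_false h, bv]
    simp

lemma bv_carry_add_bv_testBit_add_bv_testBit (j x y : ℕ) :
    bv (carry j x y) + bv (x.testBit j) + bv (y.testBit j)
      = 2 * bv (carry (j + 1) x y) + bv ((x + y).testBit j) := by
  have hx := Nat.mod_pow_succ (b := 2) (x := x) (k := j)
  have hy := Nat.mod_pow_succ (b := 2) (x := y) (k := j)
  have hz := Nat.mod_pow_succ (b := 2) (x := x + y) (k := j)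
  have h := mod_two_pow_add_mod_two_pow j x y
  have h' := mod_two_pow_add_mod_two_pow (j + 1) x y
  simp only [bv_eq_toNat, Nat.toNat_testBit] at *
  refine Nat.eq_of_mul_eq_mul_left (Nat.two_pow_pos j) ?_
  rw [pow_succ] at *
  linarith

lemma sum_range_two_pow_mul_eq_two_mul {N : ℕ} {c d : ℕ → ℕ} (h0 : c 0 = 0)
    (htop : d (N - 1) = 0) (hsucc : ∀ k, k + 1 < N → d k = c (k + 1)) :
    ∑ k ∈ range N, 2 ^ k * c k = 2 * ∑ k ∈ range N, 2 ^ k * d k := by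
  cases N with
  | zero => simp
  | succ N =>
    rw [Nat.add_sub_cancel] at htop
    rw [sum_range_succ', sum_range_succ, h0, htop, mul_zero, mul_zero, add_zero, add_zero,
      mul_sum]
    exact sum_congr rfl fun k hk => by
      rw [hsucc k (by simpa using hk), pow_succ]
      ring

theorem succinctNum_add_succinctNum_of_fullAdder {n : ℕ} {x y z c d : (Fin n → Bool) → Bool}
    (hadd : ∀ a, bv (c a) + bv (x a) + bv (y a) = 2 * bv (d a) + bv (z a))
    (hc : ∀ a, num a = 0 → c a = false) (hd : ∀ a, num a = 2 ^ n - 1 → d a = false)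
    (hdc : ∀ a a', num a' = num a + 1 → d a = c a') :
    succinctNum x + succinctNum y = succinctNum z := by
  have hsum : succinctNum c + succinctNum x + succinctNum y
      = 2 * succinctNum d + succinctNum z := by
    simp only [succinctNum, mul_sum, ← sum_add_distrib]
    refine sum_congr rfl fun a _ => ?_
    linear_combination 2 ^ num a * hadd a
  have hcarry : succinctNum c = 2 * succinctNum d := by
    rw [succinctNum_eq_sum_range, succinctNum_eq_sum_range]
    apply sum_range_two_pow_mul_eq_two_mul
    · rw [hc _ (num_enc (Nat.two_pow_pos n))]; rfl
    · rw [hd _ (num_enc (Nat.sub_lt (Nat.two_pow_pos n) one_pos))]; rfl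
    · intro k hk
      rw [hdc _ _ (by rw [num_enc hk, num_enc (by omega)])]
  omega

lemma sum_range_succ_eq_of_chain {N : ℕ} {u w r : ℕ → ℕ} (hstep : ∀ k < N, w k = u k + r k)
    (h0 : u 0 = 0) (hsucc : ∀ k, k + 1 < N → w k = u (k + 1)) :
    ∀ K < N, ∑ k ∈ range (K + 1), r k = w K
  | 0, hK => by rw [sum_range_one, hstep 0 hK, h0, zero_add]
  | K + 1, hK => by
    rw [sum_range_succ, sum_range_succ_eq_of_chain hstep h0 hsucc K (by omega),
      hsucc K hK, hstep (K + 1) hK]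

theorem sum_eq_of_chain {m : ℕ} {u w r : (Fin m → Bool) → ℕ} {t : ℕ}
    (hstep : ∀ b, w b = u b + r b) (h0 : ∀ b, num b = 0 → u b = 0)
    (hsucc : ∀ b b', num b' = num b + 1 → w b = u b') (htop : ∀ b, num b = 2 ^ m - 1 → w b = t) :
    ∑ b, r b = t := by
  have hlast : 2 ^ m - 1 < 2 ^ m := Nat.sub_lt (Nat.two_pow_pos m) one_pos
  rw [sum_eq_sum_range_enc, ← Nat.sub_add_cancel Nat.one_le_two_pow,
    sum_range_succ_eq_of_chain (u := u ∘ enc m) (w := w ∘ enc m) (fun k _ => hstep _)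
      (h0 _ (num_enc (Nat.two_pow_pos m)))
      (fun k hk => hsucc _ _ (by rw [num_enc hk, num_enc (by omega)])) _ hlast]
  exact htop _ (num_enc hlast)

def partialSum {m : ℕ} (s : (Fin m → Bool) → ℕ) (X : Finset (Fin m → Bool)) (k : ℕ) : ℕ :=
  ∑ j ∈ range k, if enc m j ∈ X then s (enc m j) else 0

section partialSum

variable {m : ℕ} (s : (Fin m → Bool) → ℕ) (X : Finset (Fin m → Bool))

lemma partialSum_zero : partialSum s X 0 = 0 := sum_range_zero _

lemma partialSum_num_succ (b : Fin m → Bool) :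
    partialSum s X (num b + 1) = partialSum s X (num b) + if b ∈ X then s b else 0 := by
  rw [partialSum, sum_range_succ, enc_num]
  rfl

lemma partialSum_two_pow : partialSum s X (2 ^ m) = ∑ b ∈ X, s b := by
  rw [partialSum, ← sum_eq_sum_range_enc (fun b => if b ∈ X then s b else 0), sum_ite_mem,
    univ_inter]

lemma partialSum_mono : Monotone (partialSum s X) := fun _ _ hkl =>
  sum_le_sum_of_subset (range_subset_range.2 hkl)

end partialSum

structure SubsetSumCertificate {n m : ℕ} (C₁ : (Fin n → Bool) → (Fin m → Bool) → Bool)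
    (C₂ : (Fin n → Bool) → Bool) (α β γ δ ε : (Fin n → Bool) → (Fin m → Bool) → Bool) : Prop where
  sel_eq : ∀ a a' b, α a b = α a' b
  of_not_sel : ∀ a b, α a b = false → γ a b = false ∧ δ a b = false ∧ β a b = ε a b
  full_adder : ∀ a b, α a b = true →
    bv (γ a b) + bv (C₁ a b) + bv (β a b) = 2 * bv (δ a b) + bv (ε a b)
  carry_in_zero : ∀ a b, num a = 0 → γ a b = false
  carry_out_last : ∀ a b, num a = 2 ^ n - 1 → δ a b = false
  initial : ∀ a b, num b = 0 → β a b = false ∧ γ a b = false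
  final : ∀ a b, num b = 2 ^ m - 1 → ε a b = C₂ a
  carry_succ : ∀ a a' b, num a' = num a + 1 → δ a b = γ a' b
  total_succ : ∀ a b b', num b' = num b + 1 → ε a b = β a b'

namespace SubsetSumCertificate

variable {n m : ℕ} {C₁ : (Fin n → Bool) → (Fin m → Bool) → Bool} {C₂ : (Fin n → Bool) → Bool}
  {α β γ δ ε : (Fin n → Bool) → (Fin m → Bool) → Bool}

protected theorem iff_forall : SubsetSumCertificate C₁ C₂ α β γ δ ε ↔
    ∀ (a a' : Fin n → Bool) (b b' : Fin m → Bool),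
      (α a b = α a' b) ∧
      (α a b = false → γ a b = false ∧ δ a b = false ∧ β a b = ε a b) ∧
      (α a b = true → bv (γ a b) + bv (C₁ a b) + bv (β a b) = 2 * bv (δ a b) + bv (ε a b)) ∧
      (num a = 0 → γ a b = false) ∧
      (num a = 2 ^ n - 1 → δ a b = false) ∧
      (num b = 0 → β a b = false ∧ γ a b = false) ∧
      (num b = 2 ^ m - 1 → ε a b = C₂ a) ∧
      (num a' = num a + 1 → δ a b = γ a' b) ∧
      (num b' = num b + 1 → ε a b = β a b') :=
  ⟨fun h a a' b b' => ⟨h.sel_eq a a' b, h.of_not_sel a b, h.full_adder a b, h.carry_in_zero a b,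
      h.carry_out_last a b, h.initial a b, h.final a b, h.carry_succ a a' b, h.total_succ a b b'⟩,
    fun h => ⟨fun a a' b => (h a a' b b).1, fun a b => (h a a b b).2.1,
      fun a b => (h a a b b).2.2.1, fun a b => (h a a b b).2.2.2.1,
      fun a b => (h a a b b).2.2.2.2.1, fun a b => (h a a b b).2.2.2.2.2.1,
      fun a b => (h a a b b).2.2.2.2.2.2.1, fun a a' b => (h a a' b b).2.2.2.2.2.2.2.1,
      fun a b b' => (h a a b b').2.2.2.2.2.2.2.2⟩⟩

lemma succinctNum_total_succ (h : SubsetSumCertificate C₁ C₂ α β γ δ ε) (b : Fin m → Bool) :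
    succinctNum (ε · b)
      = succinctNum (β · b) + if α (fun _ => false) b then succinctNum (C₁ · b) else 0 := by
  split_ifs with hb
  · have hsel a : α a b = true := (h.sel_eq a _ b).trans hb
    rw [add_comm]
    exact Eq.symm <| succinctNum_add_succinctNum_of_fullAdder (fun a => h.full_adder a b (hsel a))
      (fun a => h.carry_in_zero a b) (fun a => h.carry_out_last a b)
      (fun a a' => h.carry_succ a a' b)
  · have hsel a : α a b = false := (h.sel_eq a _ b).trans (Bool.eq_false_iff.2 hb)
    rw [add_zero]
    exact congrArg succinctNum (funext fun a => ((h.of_not_sel a b (hsel a)).2.2).symm)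

theorem exists_sum_eq (h : SubsetSumCertificate C₁ C₂ α β γ δ ε) :
    ∃ X : Finset (Fin m → Bool), ∑ b ∈ X, succinctNum (C₁ · b) = succinctNum C₂ := by
  refine ⟨univ.filter (α (fun _ => false) · = true), ?_⟩
  rw [sum_filter]
  refine sum_eq_of_chain h.succinctNum_total_succ (fun b hb => ?_)
    (fun b b' hbb' => congrArg succinctNum (funext fun a => h.total_succ a b b' hbb'))
    (fun b hb => congrArg succinctNum (funext fun a => h.final a b hb))
  simp [succinctNum, (h.initial _ b hb).1, bv]

end SubsetSumCertificate

theorem SubsetSumCertificate.exists_of_sum_eq {n m : ℕ}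
    {C₁ : (Fin n → Bool) → (Fin m → Bool) → Bool} {C₂ : (Fin n → Bool) → Bool}
    {X : Finset (Fin m → Bool)} (hX : ∑ b ∈ X, succinctNum (C₁ · b) = succinctNum C₂) :
    ∃ α β γ δ ε, SubsetSumCertificate C₁ C₂ α β γ δ ε := by
  set s : (Fin m → Bool) → ℕ := fun b => succinctNum (C₁ · b)
  set P := partialSum s X
  have hP_succ b (hb : b ∈ X) : P (num b + 1) = P (num b) + s b := by
    simp [P, partialSum_num_succ, hb]
  have hP_top : P (2 ^ m) = succinctNum C₂ := (partialSum_two_pow s X).trans hX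
  refine ⟨fun _ b => decide (b ∈ X), fun a b => (P (num b)).testBit (num a),
    fun a b => decide (b ∈ X) && carry (num a) (P (num b)) (s b),
    fun a b => decide (b ∈ X) && carry (num a + 1) (P (num b)) (s b),
    fun a b => (P (num b + 1)).testBit (num a), ⟨fun _ _ _ => rfl, ?_, ?_, ?_, ?_, ?_, ?_,
    fun a a' b h => by rw [h], fun a b b' h => by rw [h]⟩⟩
  · intro a b hb
    simp_all [P, partialSum_num_succ]
  · intro a b hb
    simp only [decide_eq_true_eq] at hb
    have hadd := bv_carry_add_bv_testBit_add_bv_testBit (num a) (P (num b)) (s b)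
    rw [testBit_succinctNum] at hadd
    simp only [hb, decide_true, Bool.true_and, hP_succ b hb]
    omega
  · intro a b ha
    simp [ha, carry_zero]
  · intro a b ha
    by_cases hb : b ∈ X
    · have hlt : P (num b) + s b < 2 ^ (num a + 1) := by
        rw [← hP_succ b hb, ha, Nat.sub_add_cancel Nat.one_le_two_pow]
        calc P (num b + 1) ≤ P (2 ^ m) := partialSum_mono s X (num_lt_two_pow b)
          _ = succinctNum C₂ := hP_top
          _ < 2 ^ 2 ^ n := succinctNum_lt C₂
      simp [hb, carry_eq_false_of_add_lt hlt]
    · simp [hb]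
  · intro a b hb
    simp [P, hb, partialSum_zero, carry_zero_left]
  · intro a b hb
    rw [hb, Nat.sub_add_cancel Nat.one_le_two_pow, hP_top, testBit_succinctNum]

theorem stmt_6 (n m : ℕ)
    (C₁ : (Fin n → Bool) → (Fin m → Bool) → Bool)
    (C₂ : (Fin n → Bool) → Bool) :
    (∃ α β γ δ ε : (Fin n → Bool) → (Fin m → Bool) → Bool,
        ∀ (a a' : Fin n → Bool) (b b' : Fin m → Bool),
          (α a b = α a' b) ∧
          (α a b = false → γ a b = false ∧ δ a b = false ∧ β a b = ε a b) ∧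
          (α a b = true → bv (γ a b) + bv (C₁ a b) + bv (β a b)
              = 2 * bv (δ a b) + bv (ε a b)) ∧
          (num a = 0 → γ a b = false) ∧
          (num a = 2 ^ n - 1 → δ a b = false) ∧
          (num b = 0 → β a b = false ∧ γ a b = false) ∧
          (num b = 2 ^ m - 1 → ε a b = C₂ a) ∧
          (num a' = num a + 1 → δ a b = γ a' b) ∧
          (num b' = num b + 1 → ε a b = β a b'))
      ↔
    (∃ X : Finset (Fin m → Bool),
        (∑ b ∈ X, ∑ a : Fin n → Bool, 2 ^ num a * bv (C₁ a b))
          = ∑ a : Fin n → Bool, 2 ^ num a * bv (C₂ a)) := by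
  simp only [← SubsetSumCertificate.iff_forall]
  exact ⟨fun ⟨_, _, _, _, _, h⟩ => h.exists_sum_eq,
    fun ⟨_, hX⟩ => SubsetSumCertificate.exists_of_sum_eq hX⟩
end

section
/- Let n, m : ℕ and let Lit : Bool → V_m → V_n → Prop be a succinctly represented CNF formula. Then there exists a function g : V_n → Bool × V_m satisfying (a) for every a ∈ V_n, Lit (g a).1 (g a).2 a, and (b) for all a, a' ∈ V_n, if (g a).2 = (g a').2 then (g a).1 = (g a').1, if and only if there exists an assignment v : V_m → Bool such that for every clause name a ∈ V_n there exist b : Bool and c ∈ V_m with Lit b c a and xor b (v c) = true. -/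
theorem stmt_7 (n m : ℕ)
    (Lit : Bool → (Fin m → Bool) → (Fin n → Bool) → Prop) :
    (∃ g : (Fin n → Bool) → Bool × (Fin m → Bool),
        (∀ a : Fin n → Bool, Lit (g a).1 (g a).2 a) ∧
        (∀ a a' : Fin n → Bool, (g a).2 = (g a').2 → (g a).1 = (g a').1))
      ↔
    (∃ v : (Fin m → Bool) → Bool,
        ∀ a : Fin n → Bool, ∃ (b : Bool) (c : Fin m → Bool),
          Lit b c a ∧ xor b (v c) = true) := by
  classical
  constructor
  · rintro ⟨g, hg1, hg2⟩
    refine ⟨fun c => if h : ∃ a, (g a).2 = c then !(g h.choose).1 else false, fun a => ?_⟩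
    refine ⟨(g a).1, (g a).2, hg1 a, ?_⟩
    have h : ∃ a', (g a').2 = (g a).2 := ⟨a, rfl⟩
    show ((g a).1 ^^ (if h : ∃ a', (g a').2 = (g a).2 then !(g h.choose).1 else false)) = true
    rw [dif_pos h, hg2 h.choose a h.choose_spec]
    cases (g a).1 <;> simp
  · rintro ⟨v, hv⟩
    choose b c hLit hx using hv
    refine ⟨fun a => (b a, c a), fun a => hLit a, fun a a' h => ?_⟩
    simp only at h ⊢
    have h1 := hx a
    have h2 := hx a'
    rw [h] at h1
    cases hb : b a <;> cases hb' : b a' <;> simp_all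
end

section
/- Let n : ℕ and f, g : Fin n → Bool. Then num(g) = (num(f) + 1) mod 2^n if and only if one of the following holds: either there exists i : Fin n such that f i = false, g i = true, for all j < i both f j = true and g j = false, and for all j > i, f j = g j; or for all i : Fin n, f i = true and g i = false. -/
lemma sum_range_two_pow (m : ℕ) : ∑ k ∈ Finset.range m, 2 ^ k = 2 ^ m - 1 := by
  induction m with
  | zero => simp
  | succ m ih =>
    rw [Finset.sum_range_succ, ih]
    have : 1 ≤ 2 ^ m := Nat.one_le_two_pow
    rw [pow_succ]
    omega

lemma sum_split {n : ℕ} (i : Fin n) (t : Fin n → ℕ) :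
    ∑ j, t j = (∑ j ∈ Finset.Iio i, t j) + t i + ∑ j ∈ Finset.Ioi i, t j := by
  have h1 : (Finset.univ : Finset (Fin n)) = (Finset.Iio i) ∪ (Finset.Ici i) := by
    ext j; simp [lt_or_ge]
  have hd : Disjoint (Finset.Iio i) (Finset.Ici i) := by
    simp only [Finset.disjoint_left, Finset.mem_Iio, Finset.mem_Ici]
    intro a ha; exact not_le.mpr ha
  rw [h1, Finset.sum_union hd, Finset.Ici_eq_cons_Ioi, Finset.sum_cons]
  ring

lemma sum_Iio_two_pow {n : ℕ} (i : Fin n) :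
    ∑ j ∈ Finset.Iio i, 2 ^ (j : ℕ) = 2 ^ (i : ℕ) - 1 := by
  rw [← sum_range_two_pow]
  exact Finset.sum_bij' (fun (j : Fin n) _ => (j : ℕ))
    (fun k hk => (⟨k, lt_trans (Finset.mem_range.mp hk) i.isLt⟩ : Fin n))
    (fun a ha => Finset.mem_range.mpr (Fin.lt_def.mp (Finset.mem_Iio.mp ha)))
    (fun a ha => Finset.mem_Iio.mpr (Fin.lt_def.mpr (Finset.mem_range.mp ha)))
    (fun a ha => rfl) (fun a ha => rfl) (fun a ha => rfl)

lemma num_lt {n : ℕ} (v : Fin n → Bool) : num v < 2 ^ n := by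
  have h : num v ≤ ∑ i : Fin n, 2 ^ (i : ℕ) := by
    apply Finset.sum_le_sum
    intro i _
    by_cases hv : v i <;> simp [num, hv]
  have h2 : ∑ i : Fin n, 2 ^ (i : ℕ) = 2 ^ n - 1 := by
    rw [Fin.sum_univ_eq_sum_range (fun k => 2 ^ k), sum_range_two_pow]
  have : 1 ≤ 2 ^ n := Nat.one_le_two_pow
  omega

lemma num_cons {n : ℕ} (b : Bool) (v : Fin n → Bool) :
    num (Fin.cons b v) = (if b then 1 else 0) + 2 * num v := by
  simp only [num, Fin.sum_univ_succ, Fin.cons_zero, Fin.cons_succ, Fin.val_zero, pow_zero,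
    one_mul, Fin.val_succ, pow_succ, Finset.mul_sum]
  rw [add_right_inj]
  exact Finset.sum_congr rfl fun x _ => by ring

lemma num_inj {n : ℕ} : Function.Injective (num (n := n)) := by
  induction n with
  | zero => intro v w _; funext i; exact i.elim0
  | succ n ih =>
    intro v w h
    rw [← Fin.cons_self_tail v, ← Fin.cons_self_tail w] at *
    rw [num_cons, num_cons] at h
    have h0 : v 0 = w 0 := by
      by_cases hv : v 0 <;> by_cases hw : w 0 <;> simp_all <;> omega
    have ht : Fin.tail v = Fin.tail w := by
      apply ih
      rw [h0] at h
      omega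
    rw [h0, ht]

lemma num_succ_step {n : ℕ} (f g : Fin n → Bool) (i : Fin n) (hf : f i = false)
    (hg : g i = true) (hlt : ∀ j : Fin n, j < i → f j = true ∧ g j = false)
    (hgt : ∀ j : Fin n, i < j → f j = g j) : num g = num f + 1 := by
  have e1 : num f = (∑ j ∈ Finset.Iio i, 2 ^ (j : ℕ)) +
      (∑ j ∈ Finset.Ioi i, 2 ^ (j : ℕ) * (if f j then 1 else 0)) := by
    rw [num, sum_split i (fun j => 2 ^ (j : ℕ) * if f j then 1 else 0)]
    rw [Finset.sum_congr rfl (fun j hj => by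
      rw [(hlt j (Finset.mem_Iio.mp hj)).1]; simp : ∀ j ∈ Finset.Iio i,
        2 ^ (j : ℕ) * (if f j then 1 else 0) = 2 ^ (j : ℕ))]
    simp [hf]
  have e2 : num g = 2 ^ (i : ℕ) +
      (∑ j ∈ Finset.Ioi i, 2 ^ (j : ℕ) * (if f j then 1 else 0)) := by
    rw [num, sum_split i (fun j => 2 ^ (j : ℕ) * if g j then 1 else 0)]
    rw [Finset.sum_congr rfl (fun j hj => by
      rw [(hlt j (Finset.mem_Iio.mp hj)).2]; simp : ∀ j ∈ Finset.Iio i,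
        2 ^ (j : ℕ) * (if g j then 1 else 0) = 0)]
    rw [Finset.sum_congr rfl (fun j hj => by
      rw [hgt j (Finset.mem_Ioi.mp hj)] : ∀ j ∈ Finset.Ioi i,
        2 ^ (j : ℕ) * (if f j then 1 else 0) = 2 ^ (j : ℕ) * (if g j then 1 else 0))]
    simp [hg]
  have h1 : 1 ≤ 2 ^ (i : ℕ) := Nat.one_le_two_pow
  rw [e1, e2, sum_Iio_two_pow]
  omega

lemma num_all_true {n : ℕ} (f : Fin n → Bool) (h : ∀ i, f i = true) :
    num f = 2 ^ n - 1 := by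
  have : num f = ∑ i : Fin n, 2 ^ (i : ℕ) := by
    apply Finset.sum_congr rfl; intro i _; simp [h i]
  rw [this, Fin.sum_univ_eq_sum_range (fun k => 2 ^ k), sum_range_two_pow]

theorem stmt_8 (n : ℕ) (f g : Fin n → Bool) :
    num g = (num f + 1) % 2 ^ n
      ↔
    ((∃ i : Fin n, f i = false ∧ g i = true ∧
        (∀ j : Fin n, j < i → f j = true ∧ g j = false) ∧
        (∀ j : Fin n, i < j → f j = g j)) ∨
      (∀ i : Fin n, f i = true ∧ g i = false)) := by
  have h1 : 1 ≤ 2 ^ n := Nat.one_le_two_pow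
  constructor
  · intro h
    by_cases hall : ∀ i, f i = true
    · right
      have hf : num f = 2 ^ n - 1 := num_all_true f hall
      have hg0 : num g = 0 := by
        rw [h, hf]
        have : 2 ^ n - 1 + 1 = 2 ^ n := by omega
        rw [this, Nat.mod_self]
      have : g = fun _ => false := by
        apply num_inj
        rw [hg0]; simp [num]
      intro i
      exact ⟨hall i, by rw [this]⟩
    · left
      push_neg at hall
      have hS : (Finset.univ.filter (fun i => f i = false)).Nonempty := by
        obtain ⟨i, hi⟩ := hall
        exact ⟨i, by simp [Bool.not_eq_true] at hi ⊢; exact hi⟩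
      set i := (Finset.univ.filter (fun i => f i = false)).min' hS with hidef
      have hfi : f i = false := by
        have := Finset.min'_mem _ hS
        simpa using this
      have hmin : ∀ j : Fin n, j < i → f j = true := by
        intro j hj
        by_contra hc
        have hjS : j ∈ Finset.univ.filter (fun i => f i = false) := by
          simp [Bool.not_eq_true] at hc ⊢; exact hc
        exact absurd (Finset.min'_le _ _ hjS) (not_le.mpr hj)
      set g' : Fin n → Bool := fun j => if j < i then false else if j = i then true else f j
        with hg'def
      have hnum : num g' = num f + 1 := by
        apply num_succ_step f g' i hfi
        · simp [hg'def]
        · intro j hj; exact ⟨hmin j hj, by simp [hg'def, hj]⟩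
        · intro j hj
          simp only [hg'def]
          rw [if_neg (by exact not_lt.mpr hj.le), if_neg (by exact (ne_of_gt hj)) ]
      have hgg' : g = g' := by
        apply num_inj
        rw [h, ← hnum, Nat.mod_eq_of_lt (num_lt g')]
      refine ⟨i, hfi, ?_, ?_, ?_⟩
      · rw [hgg']; simp [hg'def]
      · intro j hj; exact ⟨hmin j hj, by rw [hgg']; simp [hg'def, hj]⟩
      · intro j hj
        rw [hgg']
        simp only [hg'def]
        rw [if_neg (by exact not_lt.mpr hj.le), if_neg (by exact (ne_of_gt hj))]
  · rintro (⟨i, hfi, hgi, hlt, hgt⟩ | hall)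
    · have e := num_succ_step f g i hfi hgi hlt hgt
      rw [← e, Nat.mod_eq_of_lt (num_lt g)]
    · have hf : num f = 2 ^ n - 1 := num_all_true f (fun i => (hall i).1)
      have hg0 : num g = 0 := by
        have : ∀ i, g i = false := fun i => (hall i).2
        simp [num, this]
      rw [hg0, hf]
      have : 2 ^ n - 1 + 1 = 2 ^ n := by omega
      rw [this, Nat.mod_self]
end
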